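/- arXiv:math/9810103 — 3 statements merged into one kernel-verified Lean document; each statement's English description precedes it below -/
import Mathlib

section
/- Let C be a 4×4 complex matrix and consider the linear system on the space of symmetric 4×4 matrices X given by requiring CX to be symmetric. If C has four distinct eigenvalues (Jordan type 1|1|1|1), then the space of symmetric X with CX symmetric has dimension exactly 4. -/
/-!
Distinct eigenvalues make `C` diagonalizable, `C * P = P * diagonal μ`, and the congruence
`X ↦ P * X * Pᵀ` carries the solutions for `diagonal μ` isomorphically onto those for `C`.
For `diagonal μ` the condition reads `μᵢ Xᵢⱼ = μⱼ Xᵢⱼ`, so the solutions are exactly the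
diagonal matrices.
-/

open Matrix Polynomial

/-- The space of symmetric matrices X with CX symmetric. -/
noncomputable def solSpace (C : Matrix (Fin 4) (Fin 4) ℂ) :
    Submodule ℂ (Matrix (Fin 4) (Fin 4) ℂ) where
  carrier := {X | X.IsSymm ∧ (C * X).IsSymm}
  add_mem' := fun hX hY =>
    ⟨hX.1.add hY.1, by rw [Matrix.mul_add]; exact hX.2.add hY.2⟩
  zero_mem' := ⟨Matrix.isSymm_zero, by rw [Matrix.mul_zero]; exact Matrix.isSymm_zero⟩
  smul_mem' := fun c X hX =>
    ⟨hX.1.smul c, by rw [Matrix.mul_smul]; exact hX.2.smul c⟩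

namespace Matrix

variable {m n R K : Type*} [Fintype n]

theorem IsSymm.mul_mul_transpose [CommSemiring R] {X : Matrix n n R} (hX : X.IsSymm)
    (P : Matrix m n R) : (P * X * Pᵀ).IsSymm := by
  rw [IsSymm, transpose_mul, transpose_mul, transpose_transpose, hX.eq, Matrix.mul_assoc]

def symmetrizers [CommSemiring R] (C : Matrix n n R) : Submodule R (Matrix n n R) where
  carrier := {X | X.IsSymm ∧ (C * X).IsSymm}
  add_mem' := fun hX hY =>
    ⟨hX.1.add hY.1, by rw [Matrix.mul_add]; exact hX.2.add hY.2⟩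
  zero_mem' := ⟨Matrix.isSymm_zero, by rw [Matrix.mul_zero]; exact Matrix.isSymm_zero⟩
  smul_mem' := fun c X hX =>
    ⟨hX.1.smul c, by rw [Matrix.mul_smul]; exact hX.2.smul c⟩

theorem mul_mul_transpose_mem_symmetrizers [CommSemiring R] {C D P X : Matrix n n R}
    (h : C * P = P * D) (hX : X ∈ symmetrizers D) : P * X * Pᵀ ∈ symmetrizers C := by
  refine ⟨hX.1.mul_mul_transpose P, ?_⟩
  rw [← Matrix.mul_assoc, ← Matrix.mul_assoc, h, Matrix.mul_assoc P D]
  exact hX.2.mul_mul_transpose P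

variable [DecidableEq n] [Field K]

theorem finrank_symmetrizers_le_of_mul_eq {C D P : Matrix n n K} (hP : IsUnit P)
    (h : C * P = P * D) :
    Module.finrank K (symmetrizers D) ≤ Module.finrank K (symmetrizers C) := by
  let conj : Matrix n n K →ₗ[K] Matrix n n K :=
    LinearMap.mulRight K Pᵀ ∘ₗ LinearMap.mulLeft K P
  refine LinearMap.finrank_le_finrank_of_injective
    (f := conj.restrict fun X hX => mul_mul_transpose_mem_symmetrizers h hX) ?_
  intro X Y hXY
  have hPt : IsUnit Pᵀ := (isUnit_transpose P).2 hP
  have hval : P * X.1 * Pᵀ = P * Y.1 * Pᵀ := congrArg Subtype.val hXY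
  ext1
  rwa [hPt.mul_left_inj, hP.mul_right_inj] at hval

theorem finrank_symmetrizers_eq_of_mul_eq {C D P : Matrix n n K} (hP : IsUnit P)
    (h : C * P = P * D) :
    Module.finrank K (symmetrizers C) = Module.finrank K (symmetrizers D) := by
  refine le_antisymm ?_ (finrank_symmetrizers_le_of_mul_eq hP h)
  refine finrank_symmetrizers_le_of_mul_eq (P := P⁻¹) (isUnit_nonsing_inv_iff.2 hP) ?_
  have hdet := (isUnit_iff_isUnit_det P).1 hP
  calc D * P⁻¹ = P⁻¹ * (P * D) * P⁻¹ := by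
        simp [← Matrix.mul_assoc, nonsing_inv_mul _ hdet]
    _ = P⁻¹ * (C * P) * P⁻¹ := by rw [h]
    _ = P⁻¹ * C := by simp [Matrix.mul_assoc, mul_nonsing_inv _ hdet]

theorem symmetrizers_diagonal {μ : n → K} (hμ : Function.Injective μ) :
    symmetrizers (diagonal μ) = LinearMap.range (diagonalLinearMap n K K) := by
  ext X
  constructor
  · rintro ⟨hX, hμX⟩
    refine ⟨X.diag, ?_⟩
    ext i j
    rcases eq_or_ne i j with rfl | hij
    · simp
    have hμX' : μ j * X i j = μ i * X i j := by
      simpa [diagonal_mul, hX.apply i j] using hμX.apply i j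
    have hXij : X i j = 0 :=
      (mul_eq_zero.1 (by linear_combination hμX')).resolve_left
        (sub_ne_zero.2 (hμ.ne hij.symm))
    simp [diagonal_apply_ne _ hij, hXij]
  · rintro ⟨d, rfl⟩
    refine ⟨isSymm_diagonal d, ?_⟩
    change (diagonal μ * diagonal d).IsSymm
    rw [diagonal_mul_diagonal]
    exact isSymm_diagonal _

theorem finrank_symmetrizers_diagonal {μ : n → K} (hμ : Function.Injective μ) :
    Module.finrank K (symmetrizers (diagonal μ)) = Fintype.card n := by
  rw [symmetrizers_diagonal hμ, LinearMap.finrank_range_of_inj diagonal_injective,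
    Module.finrank_fintype_fun_eq_card]

theorem exists_isUnit_mul_eq_mul_diagonal {C : Matrix n n K} {μ : n → K}
    (hμ : Function.Injective μ) (hC : C.charpoly = ∏ i, (X - Polynomial.C (μ i))) :
    ∃ P : Matrix n n K, IsUnit P ∧ C * P = P * diagonal μ := by
  have hμC : ∀ i, Module.End.HasEigenvalue (toLin' C) (μ i) := fun i => by
    rw [Module.End.hasEigenvalue_iff_isRoot_charpoly, charpoly_toLin', hC, IsRoot,
      eval_prod, Finset.prod_eq_zero_iff]
    exact ⟨i, Finset.mem_univ i, by simp⟩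
  choose v hv using fun i => (hμC i).exists_hasEigenvector
  have hli : LinearIndependent K v :=
    Module.End.eigenvectors_linearIndependent' (toLin' C) μ hμ v hv
  refine ⟨(of v)ᵀ, (isUnit_transpose _).2 (linearIndependent_rows_iff_isUnit.1 hli), ?_⟩
  ext i j
  have hvj : (C *ᵥ v j) i = μ j * v j i := by
    simpa [toLin'_apply] using congrFun (hv j).apply_eq_smul i
  rw [mul_diagonal]
  simpa [mul_apply, mulVec, dotProduct, mul_comm] using hvj

end Matrix

theorem solSpace_eq_symmetrizers (C : Matrix (Fin 4) (Fin 4) ℂ) : solSpace C = symmetrizers C :=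
  rfl

theorem solSpace_dim_of_distinct_eigenvalues
    (C : Matrix (Fin 4) (Fin 4) ℂ)
    (hC : ∃ μ : Fin 4 → ℂ, Function.Injective μ ∧
      C.charpoly = ∏ i, (X - Polynomial.C (μ i))) :
    Module.finrank ℂ (solSpace C) = 4 := by
  obtain ⟨μ, hμ, hcp⟩ := hC
  obtain ⟨P, hP, hCP⟩ := exists_isUnit_mul_eq_mul_diagonal hμ hcp
  rw [solSpace_eq_symmetrizers, finrank_symmetrizers_eq_of_mul_eq hP hCP,
    finrank_symmetrizers_diagonal hμ, Fintype.card_fin]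
end

section
/- Let C be a 4×4 complex matrix equal to a scalar multiple of the identity. Then every symmetric 4×4 matrix X satisfies that CX is symmetric; i.e., the solution space has dimension 10. Conversely, if C is not a scalar multiple of the identity, then the space of symmetric 4×4 matrices X with CX symmetric has dimension at most 8. -/
/-!
For symmetric `X`, the matrix `C X` is symmetric iff `C X = X Cᵀ`, so the solution space is the
kernel of `X ↦ C X - X Cᵀ` on the 10-dimensional space of symmetric matrices. For scalar `C`
this map vanishes. Otherwise `C` has a nonzero off-diagonal entry or two distinct diagonal
entries, and with the help of a third index one finds two symmetric matrices built from matrix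
units whose images are linearly independent (they are triangular in two chosen entries), so the
map has rank at least 2.
-/

open Matrix

open Module

theorem Submodule.finrank_add_card_le_of_le_inf_ker {K V W : Type*} [Field K] [AddCommGroup V]
    [Module K V] [FiniteDimensional K V] [AddCommGroup W] [Module K W] {S T : Submodule K V}
    (f : V →ₗ[K] W) (hS : S ≤ T ⊓ LinearMap.ker f) {ι : Type*} [Fintype ι] {x : ι → V}
    (hxT : ∀ i, x i ∈ T) (hx : LinearIndependent K (f ∘ x)) :
    finrank K S + Fintype.card ι ≤ finrank K T := by
  set g := f.domRestrict T
  have hS_ker : finrank K S ≤ finrank K (LinearMap.ker g) := by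
    rw [← (Submodule.comapSubtypeEquivOfLe fun _ h => (hS h).1).finrank_eq]
    exact Submodule.finrank_mono fun v hv => (hS hv).2
  have hcard_range : Fintype.card ι ≤ finrank K (LinearMap.range g) := by
    let y : ι → LinearMap.range g := fun i => ⟨g ⟨x i, hxT i⟩, LinearMap.mem_range_self g _⟩
    exact (LinearIndependent.of_comp (v := y) (LinearMap.range g).subtype hx)
      |>.fintype_card_le_finrank
  have := g.finrank_range_add_finrank_ker
  omega

namespace Matrix

section Symmetric

variable (R n : Type*) [Semiring R]

def symmetricSubmodule : Submodule R (Matrix n n R) where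
  carrier := {A | A.IsSymm}
  add_mem' := IsSymm.add
  zero_mem' := isSymm_zero
  smul_mem' c _ hA := hA.smul c

variable {R n} [LinearOrder n]

def symmetricSubmoduleEquivUpper :
    symmetricSubmodule R n ≃ₗ[R] ({p : n × n // p.1 ≤ p.2} → R) where
  toFun A p := (A : Matrix n n R) p.1.1 p.1.2
  invFun v := ⟨of fun i j => if h : i ≤ j then v ⟨(i, j), h⟩ else v ⟨(j, i), le_of_not_ge h⟩, by
    refine IsSymm.ext fun i j => ?_
    rcases lt_trichotomy i j with hij | rfl | hij
    · simp [of_apply, hij.le, hij.not_ge]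
    · rfl
    · simp [of_apply, hij.le, hij.not_ge]⟩
  map_add' _ _ := rfl
  map_smul' _ _ := rfl
  left_inv A := by
    ext i j
    by_cases hij : i ≤ j
    · simp [of_apply, hij]
    · simp [of_apply, hij, A.2.apply i j]
  right_inv v := funext fun p => dif_pos p.2

end Symmetric

theorem finrank_symmetricSubmodule (R n : Type*) [Ring R] [StrongRankCondition R] [Fintype n]
    [LinearOrder n] :
    finrank R (symmetricSubmodule R n) = Fintype.card {p : n × n // p.1 ≤ p.2} := by
  rw [symmetricSubmoduleEquivUpper.finrank_eq, finrank_fintype_fun_eq_card]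

theorem linearIndependent_pair_of_apply {K m n : Type*} [Field K] {A B : Matrix m n K}
    {i k : m} {j l : n} (hA : A i j ≠ 0) (hA' : A k l = 0) (hB : B k l ≠ 0) :
    LinearIndependent K ![A, B] := by
  refine LinearIndependent.pair_iff.2 fun s t hst => ?_
  have hkl := congr_fun₂ hst k l
  simp only [add_apply, smul_apply, smul_eq_mul, hA', mul_zero, zero_add, zero_apply] at hkl
  obtain rfl : t = 0 := (mul_eq_zero.1 hkl).resolve_right hB
  have hij := congr_fun₂ hst i j
  simp only [zero_smul, add_zero, smul_apply, smul_eq_mul, zero_apply] at hij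
  exact ⟨(mul_eq_zero.1 hij).resolve_right hA, rfl⟩

theorem IsDiag.exists_eq_smul_one {R n : Type*} [Semiring R] [DecidableEq n] {C : Matrix n n R}
    (hC : C.IsDiag) (hdiag : ∀ i j, C i i = C j j) : ∃ c : R, C = c • 1 := by
  rcases isEmpty_or_nonempty n with _ | ⟨⟨i₀⟩⟩
  · exact ⟨0, Subsingleton.elim _ _⟩
  refine ⟨C i₀ i₀, ext fun i j => ?_⟩
  rcases eq_or_ne i j with rfl | hij
  · simp [hdiag i i₀]
  · simp [hij, hC hij]

variable {R n : Type*} [CommRing R] [Fintype n]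

def mulSubMulTranspose (C : Matrix n n R) : Matrix n n R →ₗ[R] Matrix n n R :=
  LinearMap.mulLeft R C - LinearMap.mulRight R Cᵀ

@[simp]
theorem mulSubMulTranspose_apply (C X : Matrix n n R) :
    C.mulSubMulTranspose X = C * X - X * Cᵀ :=
  rfl

theorem mulSubMulTranspose_smul_one [DecidableEq n] (c : R) :
    (c • 1 : Matrix n n R).mulSubMulTranspose = 0 := by
  ext1 X
  simp

theorem IsSymm.isSymm_mul_iff {C X : Matrix n n R} (hX : X.IsSymm) :
    (C * X).IsSymm ↔ C.mulSubMulTranspose X = 0 := by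
  rw [IsSymm, transpose_mul, hX.eq, mulSubMulTranspose_apply, sub_eq_zero, eq_comm]

variable {K : Type*} [Field K] [DecidableEq n]

theorem linearIndependent_mulSubMulTranspose_of_ne_zero {C : Matrix n n K} {p q b : n}
    (hpq : p ≠ q) (hbp : b ≠ p) (hbq : b ≠ q) (hC : C p q ≠ 0) :
    LinearIndependent K ![C.mulSubMulTranspose (single q q 1),
      C.mulSubMulTranspose (single q b 1 + (single q b 1)ᵀ)] := by
  refine linearIndependent_pair_of_apply (i := p) (j := q) (k := p) (l := b) ?_ ?_ ?_
  · simpa [hpq] using hC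
  · simp [hpq, hbq]
  · simpa [transpose_single, mul_add, add_mul, hpq, hbp.symm, hbq] using hC

theorem linearIndependent_mulSubMulTranspose_of_diag_ne {C : Matrix n n K}
    (hC : C.IsDiag) {p q s : n} (hpq : p ≠ q) (hsp : s ≠ p) (hsq : s ≠ q)
    (hCq : C p p ≠ C q q) (hCs : C p p ≠ C s s) :
    LinearIndependent K ![C.mulSubMulTranspose (single p q 1 + (single p q 1)ᵀ),
      C.mulSubMulTranspose (single p s 1 + (single p s 1)ᵀ)] := by
  refine linearIndependent_pair_of_apply (i := p) (j := q) (k := p) (l := s) ?_ ?_ ?_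
  · simpa [transpose_single, mul_add, add_mul, hpq, hpq.symm, sub_eq_zero] using hCq
  · simp [transpose_single, mul_add, add_mul, hpq, hsp, hsq, hC hsq]
  · simpa [transpose_single, mul_add, add_mul, hsp, hsp.symm, sub_eq_zero] using hCs

theorem exists_isSymm_linearIndependent_mulSubMulTranspose (hn : 2 < Fintype.card n)
    {C : Matrix n n K} (hC : ¬∃ c : K, C = c • 1) :
    ∃ X : Fin 2 → Matrix n n K, (∀ i, (X i).IsSymm) ∧
      LinearIndependent K (C.mulSubMulTranspose ∘ X) := by
  have third (p q : n) : ∃ b, b ≠ p ∧ b ≠ q :=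
    Cardinal.exists_ne_ne_of_three_le (by rw [Cardinal.mk_fintype]; exact_mod_cast hn) p q
  suffices ∃ X₁ X₂ : Matrix n n K, X₁.IsSymm ∧ X₂.IsSymm ∧
      LinearIndependent K ![C.mulSubMulTranspose X₁, C.mulSubMulTranspose X₂] by
    obtain ⟨X₁, X₂, h₁, h₂, hind⟩ := this
    refine ⟨![X₁, X₂], Fin.forall_fin_two.2 ⟨h₁, h₂⟩, ?_⟩
    convert hind using 1
    ext i : 1
    fin_cases i <;> rfl
  by_cases hoff : ∃ p q, p ≠ q ∧ C p q ≠ 0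
  · obtain ⟨p, q, hpq, hCpq⟩ := hoff
    obtain ⟨b, hbp, hbq⟩ := third p q
    exact ⟨_, _, transpose_single q q 1, isSymm_add_transpose_self _,
      linearIndependent_mulSubMulTranspose_of_ne_zero hpq hbp hbq hCpq⟩
  push Not at hoff
  obtain ⟨i, j, hij⟩ : ∃ i j, C i i ≠ C j j := by
    by_contra! h
    exact hC (IsDiag.exists_eq_smul_one hoff h)
  have hne : i ≠ j := fun h => hij (h ▸ rfl)
  obtain ⟨k, hki, hkj⟩ := third i j
  by_cases hk : C k k = C i i
  · exact ⟨_, _, isSymm_add_transpose_self _, isSymm_add_transpose_self _,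
      linearIndependent_mulSubMulTranspose_of_diag_ne hoff hne.symm hkj hki hij.symm
        (hk ▸ hij.symm)⟩
  · exact ⟨_, _, isSymm_add_transpose_self _, isSymm_add_transpose_self _,
      linearIndependent_mulSubMulTranspose_of_diag_ne hoff hne hki hkj hij (Ne.symm hk)⟩

end Matrix

theorem solSpace_eq_inf_ker (C : Matrix (Fin 4) (Fin 4) ℂ) :
    solSpace C = symmetricSubmodule ℂ (Fin 4) ⊓ LinearMap.ker C.mulSubMulTranspose := by
  ext X
  exact and_congr_right IsSymm.isSymm_mul_iff

theorem solSpace_dim_scalar_iff (C : Matrix (Fin 4) (Fin 4) ℂ) :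
    ((∃ c : ℂ, C = c • (1 : Matrix (Fin 4) (Fin 4) ℂ)) →
      (∀ X : Matrix (Fin 4) (Fin 4) ℂ, X.IsSymm → (C * X).IsSymm) ∧
      Module.finrank ℂ (solSpace C) = 10) ∧
    ((¬ ∃ c : ℂ, C = c • (1 : Matrix (Fin 4) (Fin 4) ℂ)) →
      Module.finrank ℂ (solSpace C) ≤ 8) := by
  have hdim : finrank ℂ (symmetricSubmodule ℂ (Fin 4)) = 10 := by
    rw [finrank_symmetricSubmodule]
    rfl
  refine ⟨?_, fun hC => ?_⟩
  · rintro ⟨c, rfl⟩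
    have hsol : solSpace (c • 1) = symmetricSubmodule ℂ (Fin 4) := by
      rw [solSpace_eq_inf_ker, mulSubMulTranspose_smul_one, LinearMap.ker_zero, inf_top_eq]
    exact ⟨fun X hX => (hsol.ge hX).2, hsol ▸ hdim⟩
  · obtain ⟨X, hX, hind⟩ := exists_isSymm_linearIndependent_mulSubMulTranspose (by decide) hC
    have := Submodule.finrank_add_card_le_of_le_inf_ker _ (solSpace_eq_inf_ker C).le hX hind
    rw [hdim, Fintype.card_fin] at this
    omega
end

section
/- With notation as in the transport-of-equations setup: let Z be a subspace of codimension f of A ⊗ S²V, H a hyperplane of V such that Z is transverse to A ⊗ H·V, Z′ = Z ∩ (A ⊗ H·V), and T a subspace of A ⊗ H·V contained in Z′. Set F′ = (A ⊗ H·V)/T and F = (A ⊗ S²V)/Z, and let f*_{Z,T} : A ⊗ V → (V^∨ ⊗ F) ⊕ (H^∨ ⊗ F′) be the direct sum of the two associated maps. Then for a linear map m : B → A ⊗ V, the image of m(1) is contained in Z and the image of m_H(1) is contained in T if and only if f*_{Z,T} ∘ m = 0. -/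
/-!
Both conditions are linear in the linear form `v` (resp. `h ∈ H`), so they only have to be checked
on the basis vectors `X q`; there they say exactly that the entries of `g*(m w)` and `f*(m w)`
vanish.  Membership in `A ⊗ S²V` and `A ⊗ H·V` is automatic because `m w` has linear entries.
-/

open MvPolynomial

namespace MvPolynomial

variable {σ R : Type*} [CommSemiring R]

theorem IsHomogeneous.mul_X_mem_span {p : MvPolynomial σ R} (hp : p.IsHomogeneous 1) (r : σ) :
    p * X r ∈ Submodule.span R (Set.range fun q => X q * X r) := by
  have hp : p ∈ Submodule.span R (Set.range X) :=
    homogeneousSubmodule_one_eq_span_X (σ := σ) (R := R) ▸ hp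
  have := Submodule.mem_map_of_mem (f := LinearMap.mulRight R (X r)) hp
  rwa [Submodule.map_span, ← Set.range_comp] at this

variable {α ι : Type*} [Fintype ι]

theorem mul_sum_C_mul_X (t : α → MvPolynomial σ R) (v : ι → R) (e : ι → σ) :
    (fun j => t j * ∑ q, C (v q) * X (e q)) = ∑ q, v q • fun j => t j * X (e q) := by
  ext j : 1
  simp only [Finset.mul_sum, Finset.sum_apply, Pi.smul_apply, smul_eq_C_mul]
  exact Finset.sum_congr rfl fun q _ => by ring

theorem forall_mul_sum_C_mul_X_mem_iff (S : Submodule R (α → MvPolynomial σ R))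
    (t : α → MvPolynomial σ R) (e : ι → σ) :
    (∀ v : ι → R, (fun j => t j * ∑ q, C (v q) * X (e q)) ∈ S) ↔
      ∀ q, (fun j => t j * X (e q)) ∈ S := by
  simp only [mul_sum_C_mul_X]
  refine ⟨fun hS q => ?_, fun hS v => S.sum_mem fun q _ => S.smul_mem _ (hS q)⟩
  classical
  simpa [Pi.single_apply] using hS (Pi.single q 1)

end MvPolynomial

theorem transport_of_equations_combined_general
    (k : Type*) [Field k] (n a b f f' : ℕ)
    (mL : (Fin b → k) →ₗ[k] (Fin a → MvPolynomial (Fin (n + 1)) k))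
    (hm : ∀ w j, (mL w j).IsHomogeneous 1)
    (gL : (Fin a → MvPolynomial (Fin (n + 1)) k) →ₗ[k] (Fin f → k))
    (fL : (Fin a → MvPolynomial (Fin (n + 1)) k) →ₗ[k] (Fin f' → k))
    (gs : (Fin a → MvPolynomial (Fin (n + 1)) k) → Matrix (Fin f) (Fin (n + 1)) k)
    (hgs : ∀ t s q, gs t s q = gL (fun j => t j * X q) s)
    (fs : (Fin a → MvPolynomial (Fin (n + 1)) k) → Matrix (Fin f') (Fin n) k)
    (hfs : ∀ t s p, fs t s p = fL (fun j => t j * X (Fin.castSucc p)) s) :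
    ((∀ (w : Fin b → k) (v : Fin (n + 1) → k),
        (fun j => mL w j * ∑ q, C (v q) * X q) ∈
          (Submodule.pi Set.univ fun _ : Fin a =>
            homogeneousSubmodule (Fin (n + 1)) k 2) ⊓ LinearMap.ker gL) ∧
     (∀ (w : Fin b → k) (h : Fin n → k),
        (fun j => mL w j * ∑ p, C (h p) * X (Fin.castSucc p)) ∈
          (Submodule.pi Set.univ fun _ : Fin a =>
            Submodule.span k {p : MvPolynomial (Fin (n + 1)) k |
              ∃ (i : Fin n) (q : Fin (n + 1)), p = X (Fin.castSucc i) * X q}) ⊓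
          LinearMap.ker fL))
    ↔ (∀ w, gs (mL w) = 0 ∧ fs (mL w) = 0) := by
  have hquad (w q) : (fun j => mL w j * X q) ∈
      Submodule.pi Set.univ fun _ : Fin a => homogeneousSubmodule (Fin (n + 1)) k 2 :=
    fun j _ => (hm w j).mul (isHomogeneous_X k q)
  have hHV (w) (p : Fin n) : (fun j => mL w j * X (Fin.castSucc p)) ∈
      Submodule.pi Set.univ fun _ : Fin a => Submodule.span k {p : MvPolynomial (Fin (n + 1)) k |
        ∃ (i : Fin n) (q : Fin (n + 1)), p = X (Fin.castSucc i) * X q} :=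
    fun j _ => Submodule.span_mono (by rintro _ ⟨q, rfl⟩; exact ⟨p, q, mul_comm _ _⟩)
      ((hm w j).mul_X_mem_span _)
  have hgs_eq_zero (t) : gs t = 0 ↔ ∀ q, gL (fun j => t j * X q) = 0 := by
    simp only [← Matrix.ext_iff, hgs, _root_.funext_iff, Matrix.zero_apply, Pi.zero_apply]
    exact forall_comm
  have hfs_eq_zero (t) : fs t = 0 ↔ ∀ p, fL (fun j => t j * X (Fin.castSucc p)) = 0 := by
    simp only [← Matrix.ext_iff, hfs, _root_.funext_iff, Matrix.zero_apply, Pi.zero_apply]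
    exact forall_comm
  rw [← forall_and]
  refine forall_congr' fun w => ?_
  rw [hgs_eq_zero, hfs_eq_zero]
  refine and_congr ((forall_mul_sum_C_mul_X_mem_iff _ (mL w) id).trans ?_)
    ((forall_mul_sum_C_mul_X_mem_iff _ (mL w) Fin.castSucc).trans ?_)
  · exact forall_congr' fun q => by simp [Submodule.mem_inf, hquad w q]
  · exact forall_congr' fun p => by simp [Submodule.mem_inf, hHV w p]

theorem transport_of_equations_combined
    (k : Type*) [Field k] (n a b f f' : ℕ)
    (mL : (Fin b → k) →ₗ[k] (Fin a → MvPolynomial (Fin (n + 1)) k))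
    (hm : ∀ w j, (mL w j).IsHomogeneous 1)
    (gL : (Fin a → MvPolynomial (Fin (n + 1)) k) →ₗ[k] (Fin f → k))
    (fL : (Fin a → MvPolynomial (Fin (n + 1)) k) →ₗ[k] (Fin f' → k))
    -- Z = (A ⊗ S²V) ∩ ker gL has codimension f in A ⊗ S²V :
    (hZcodim :
      Module.finrank k
        ↥((Submodule.pi Set.univ fun _ : Fin a =>
            homogeneousSubmodule (Fin (n + 1)) k 2) ⊓ LinearMap.ker gL) + f =
      Module.finrank k
        ↥(Submodule.pi Set.univ fun _ : Fin a =>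
            homogeneousSubmodule (Fin (n + 1)) k 2))
    -- Z is transverse to A ⊗ H·V :
    (htrans :
      ((Submodule.pi Set.univ fun _ : Fin a =>
          homogeneousSubmodule (Fin (n + 1)) k 2) ⊓ LinearMap.ker gL) ⊔
        (Submodule.pi Set.univ fun _ : Fin a =>
          Submodule.span k {p : MvPolynomial (Fin (n + 1)) k |
            ∃ (i : Fin n) (q : Fin (n + 1)), p = X (Fin.castSucc i) * X q}) =
      (Submodule.pi Set.univ fun _ : Fin a =>
        homogeneousSubmodule (Fin (n + 1)) k 2))
    -- T = (A ⊗ H·V) ∩ ker fL is contained in Z' = Z ∩ (A ⊗ H·V) :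
    (hTZ :
      ((Submodule.pi Set.univ fun _ : Fin a =>
          Submodule.span k {p : MvPolynomial (Fin (n + 1)) k |
            ∃ (i : Fin n) (q : Fin (n + 1)), p = X (Fin.castSucc i) * X q}) ⊓
        LinearMap.ker fL) ≤
      ((Submodule.pi Set.univ fun _ : Fin a =>
          homogeneousSubmodule (Fin (n + 1)) k 2) ⊓ LinearMap.ker gL))
    (gs : (Fin a → MvPolynomial (Fin (n + 1)) k) → Matrix (Fin f) (Fin (n + 1)) k)
    (hgs : ∀ t s q, gs t s q = gL (fun j => t j * X q) s)
    (fs : (Fin a → MvPolynomial (Fin (n + 1)) k) → Matrix (Fin f') (Fin n) k)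
    (hfs : ∀ t s p, fs t s p = fL (fun j => t j * X (Fin.castSucc p)) s) :
    ((∀ (w : Fin b → k) (v : Fin (n + 1) → k),
        (fun j => mL w j * ∑ q, C (v q) * X q) ∈
          (Submodule.pi Set.univ fun _ : Fin a =>
            homogeneousSubmodule (Fin (n + 1)) k 2) ⊓ LinearMap.ker gL) ∧
     (∀ (w : Fin b → k) (h : Fin n → k),
        (fun j => mL w j * ∑ p, C (h p) * X (Fin.castSucc p)) ∈
          (Submodule.pi Set.univ fun _ : Fin a =>
            Submodule.span k {p : MvPolynomial (Fin (n + 1)) k |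
              ∃ (i : Fin n) (q : Fin (n + 1)), p = X (Fin.castSucc i) * X q}) ⊓
          LinearMap.ker fL))
    ↔ (∀ w, gs (mL w) = 0 ∧ fs (mL w) = 0) :=
  transport_of_equations_combined_general k n a b f f' mL hm gL fL gs hgs fs hfs
end
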